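/- For an orthohedral set S and each k ≤ rk(S), there is a normal series G_{k-1}(S) ≤ C^{ord}(Γ^k(S)) ≤ C(Γ^k(S)) ≤ G_k(S) in pei(S); in particular, any element of pei(S) of rank ≤ k+1 fixing all rank-k germs and preserving the germ orderings restricted to a rank-(k+1) orthant that it maps to a commensurable orthant must act as a parallel translation there. -/

import Mathlib

open Pointwise

namespace PeiPaper

/-- Points of the face of the standard orthant spanned by the canonical basis vectors in `Y`. -/
def stdFace (N : ℕ) (Y : Finset (Fin N)) : Set (Fin N → ℤ) :=
  {v | (∀ i, 0 ≤ v i) ∧ ∀ i, i ∉ Y → v i = 0}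

/-- Integral orthogonal matrix. -/
def IsOrthMat {N : ℕ} (A : Matrix (Fin N) (Fin N) ℤ) : Prop :=
  A * A.transpose = 1

/-- `L` is an integral orthant of rank `k` in `ℤ^N`: an affine-orthogonal image of a
rank-`k` face of the standard orthant. -/
def IsOrthantOfRank {N : ℕ} (L : Set (Fin N → ℤ)) (k : ℕ) : Prop :=
  ∃ (a : Fin N → ℤ) (A : Matrix (Fin N) (Fin N) ℤ) (Y : Finset (Fin N)),
    IsOrthMat A ∧ Y.card = k ∧ L = (fun v => a + A.mulVec v) '' stdFace N Y

def IsOrthant {N : ℕ} (L : Set (Fin N → ℤ)) : Prop := ∃ k, IsOrthantOfRank L k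

/-- `S` is orthohedral: a finite union of integral orthants. -/
def IsOrthohedral {N : ℕ} (S : Set (Fin N → ℤ)) : Prop :=
  ∃ 𝓛 : Set (Set (Fin N → ℤ)), 𝓛.Finite ∧ (∀ L ∈ 𝓛, IsOrthant L) ∧ S = ⋃₀ 𝓛

/-- The rank of a set: the maximal rank of an orthant contained in it. -/
noncomputable def orthRank {N : ℕ} (S : Set (Fin N → ℤ)) : ℕ :=
  sSup {k | ∃ L, IsOrthantOfRank L k ∧ L ⊆ S}

/-- Commensurability: the intersection is nonempty and has the same rank as both sets. -/
def Commensurable {N : ℕ} (L L' : Set (Fin N → ℤ)) : Prop :=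
  (L ∩ L').Nonempty ∧ orthRank L = orthRank (L ∩ L') ∧ orthRank L' = orthRank (L ∩ L')

/-- The rank-`k` orthants contained in `S`. -/
def germSet {N : ℕ} (S : Set (Fin N → ℤ)) (k : ℕ) : Set (Set (Fin N → ℤ)) :=
  {L | IsOrthantOfRank L k ∧ L ⊆ S}

/-- The rank-`k` germs of `S`: commensurability classes of rank-`k` orthants of `S`. -/
def Germ {N : ℕ} (S : Set (Fin N → ℤ)) (k : ℕ) : Type _ :=
  Quot (fun L L' : germSet S k => Commensurable L.1 L'.1)

def germOf {N : ℕ} (S : Set (Fin N → ℤ)) (k : ℕ) (L : germSet S k) : Germ S k :=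
  Quot.mk _ L

/-- The number of rank-`k` germs of `S` (as a natural number; `0` if infinite). -/
noncomputable def heightAt {N : ℕ} (S : Set (Fin N → ℤ)) (k : ℕ) : ℕ :=
  Nat.card (Germ S k)

/-- The height of an orthohedral set: the number of germs of maximal rank. -/
noncomputable def height {N : ℕ} (S : Set (Fin N → ℤ)) : ℕ :=
  heightAt S (orthRank S)

/-- `f` is (the restriction of) an isometry of `ℤ^N` on `L`. -/
def IsometricOn {N : ℕ} (f : (Fin N → ℤ) → (Fin N → ℤ)) (L : Set (Fin N → ℤ)) : Prop :=
  ∃ (a : Fin N → ℤ) (A : Matrix (Fin N) (Fin N) ℤ),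
    IsOrthMat A ∧ ∀ x ∈ L, f x = a + A.mulVec x

/-- `f` is (the restriction of) a translation on `L`. -/
def TranslationOn {N : ℕ} (f : (Fin N → ℤ) → (Fin N → ℤ)) (L : Set (Fin N → ℤ)) : Prop :=
  ∃ a : Fin N → ℤ, ∀ x ∈ L, f x = a + x

/-- `f` is a piecewise-Euclidean-isometric map on `S`. -/
def IsPeiMapOn {N : ℕ} (S : Set (Fin N → ℤ)) (f : (Fin N → ℤ) → (Fin N → ℤ)) : Prop :=
  ∃ 𝓛 : Set (Set (Fin N → ℤ)), 𝓛.Finite ∧ (∀ L ∈ 𝓛, IsOrthant L) ∧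
    S = ⋃₀ 𝓛 ∧ 𝓛.PairwiseDisjoint id ∧ ∀ L ∈ 𝓛, IsometricOn f L

/-- `f` is a piecewise-Euclidean-translation map on `S`. -/
def IsPetMapOn {N : ℕ} (S : Set (Fin N → ℤ)) (f : (Fin N → ℤ) → (Fin N → ℤ)) : Prop :=
  ∃ 𝓛 : Set (Set (Fin N → ℤ)), 𝓛.Finite ∧ (∀ L ∈ 𝓛, IsOrthant L) ∧
    S = ⋃₀ 𝓛 ∧ 𝓛.PairwiseDisjoint id ∧ ∀ L ∈ 𝓛, TranslationOn f L

def IsPeiIso {N : ℕ} (S S' : Set (Fin N → ℤ)) (f : (Fin N → ℤ) → (Fin N → ℤ)) : Prop :=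
  IsPeiMapOn S f ∧ Set.InjOn f S ∧ f '' S = S'

def PeiIsomorphic {N : ℕ} (S S' : Set (Fin N → ℤ)) : Prop := ∃ f, IsPeiIso S S' f

def IsPetIso {N : ℕ} (S S' : Set (Fin N → ℤ)) (f : (Fin N → ℤ) → (Fin N → ℤ)) : Prop :=
  IsPetMapOn S f ∧ Set.InjOn f S ∧ f '' S = S'

def PetIsomorphic {N : ℕ} (S S' : Set (Fin N → ℤ)) : Prop := ∃ f, IsPetIso S S' f

/-- A pei-permutation of `S`: a permutation of `ℤ^N` supported on `S` which is pei on `S`. -/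
def IsPeiPerm {N : ℕ} (S : Set (Fin N → ℤ)) (g : Equiv.Perm (Fin N → ℤ)) : Prop :=
  IsPeiMapOn S ⇑g ∧ ∀ x ∉ S, g x = x

/-- The element `g` has rank at most `k`: it is supported on an orthohedral set of rank `≤ k`. -/
def rankLE {N : ℕ} (g : Equiv.Perm (Fin N → ℤ)) (k : ℕ) : Prop :=
  ∃ T : Set (Fin N → ℤ), IsOrthohedral T ∧ orthRank T ≤ k ∧ ∀ x ∉ T, g x = x

/-- `g` fixes every rank-`k` germ of `S`. -/
def FixesGerm {N : ℕ} (S : Set (Fin N → ℤ)) (k : ℕ) (g : Equiv.Perm (Fin N → ℤ)) : Prop :=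
  ∀ L, IsOrthantOfRank L k → L ⊆ S →
    ∃ L', IsOrthantOfRank L' k ∧ L' ⊆ L ∧ Commensurable L L' ∧
      IsometricOn (⇑g) L' ∧ Commensurable (⇑g '' L') L

/-- `g` fixes every rank-`k` germ of `S` and acts on its tangent coset by a translation. -/
def TranslatesGerm {N : ℕ} (S : Set (Fin N → ℤ)) (k : ℕ) (g : Equiv.Perm (Fin N → ℤ)) : Prop :=
  ∀ L, IsOrthantOfRank L k → L ⊆ S →
    ∃ L' a, IsOrthantOfRank L' k ∧ L' ⊆ L ∧ Commensurable L L' ∧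
      (∀ x ∈ L', g x = a + x) ∧ Commensurable (⇑g '' L') L

/-- `σ` is the map induced by `g` on the rank-`k` germs of `S`. -/
def InducesGermMap {N : ℕ} (S : Set (Fin N → ℤ)) (k : ℕ) (g : Equiv.Perm (Fin N → ℤ))
    (σ : Germ S k → Germ S k) : Prop :=
  ∀ L : germSet S k, ∃ (L'' : Set (Fin N → ℤ)) (M : germSet S k),
    IsOrthantOfRank L'' k ∧ L'' ⊆ L.1 ∧ Commensurable L.1 L'' ∧
    M.1 = ⇑g '' L'' ∧ σ (germOf S k L) = germOf S k M

/-- A finitary permutation which is even (has sign `1` on a finite invariant subset). -/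
def IsEvenFinitary {α : Type*} (σ : Equiv.Perm α) : Prop :=
  ∃ (F : Finset α) (σF : Equiv.Perm F),
    (∀ a ∉ F, σ a = a) ∧ (∀ a : F, σ (a : α) = (σF a : α)) ∧
    @Equiv.Perm.sign F (Classical.decEq _) inferInstance σF = 1

/-- `g` induces an even finitary permutation on the rank-`k` germs of `S`. -/
def IsEvenOnGerms {N : ℕ} (S : Set (Fin N → ℤ)) (k : ℕ) (g : Equiv.Perm (Fin N → ℤ)) : Prop :=
  ∃ σ : Equiv.Perm (Germ S k), InducesGermMap S k g ⇑σ ∧ IsEvenFinitary σ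

/-- Ordering of germs (of arbitrary ranks): `p ≤ q` if they have representatives `L ⊆ L'`. -/
def germLE {N : ℕ} (S : Set (Fin N → ℤ)) (p q : Σ k, Germ S k) : Prop :=
  ∃ (L : germSet S p.1) (L' : germSet S q.1),
    germOf S p.1 L = p.2 ∧ germOf S q.1 L' = q.2 ∧ L.1 ⊆ L'.1

/-- A maximal germ of `S`. -/
def IsMaxGerm {N : ℕ} (S : Set (Fin N → ℤ)) (p : Σ k, Germ S k) : Prop :=
  ∀ q, germLE S p q → germLE S q p

/-- A `0`-based orthant. -/
def IsBasedOrthant {N : ℕ} (L0 : Set (Fin N → ℤ)) : Prop :=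
  ∃ (A : Matrix (Fin N) (Fin N) ℤ) (Y : Finset (Fin N)),
    IsOrthMat A ∧ L0 = (fun v => A.mulVec v) '' stdFace N Y

/-- Two (oriented) parallel orthants. -/
def ParallelOrthants {N : ℕ} (L L' : Set (Fin N → ℤ)) : Prop :=
  ∃ a : Fin N → ℤ, L' = a +ᵥ L

/-- The indicator image `S_τ` of `S`: the union of the `0`-based parallel translates of
the orthants contained in `S`. -/
def indicatorImage {N : ℕ} (S : Set (Fin N → ℤ)) : Set (Fin N → ℤ) :=
  ⋃₀ {L0 | IsBasedOrthant L0 ∧ ∃ a : Fin N → ℤ, (a +ᵥ L0) ⊆ S}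

/-- The height function `h_S`: the number of maximal germs of `S` whose indicator is `L0`. -/
noncomputable def hFun {N : ℕ} (S : Set (Fin N → ℤ)) (L0 : Set (Fin N → ℤ)) : ℕ :=
  Nat.card {p : Σ k, Germ S k //
    IsMaxGerm S p ∧ ∃ L : germSet S p.1, germOf S p.1 L = p.2 ∧ ∃ a : Fin N → ℤ, L.1 = a +ᵥ L0}

/-- `S` is quasi-normal: the maximal based orthants of `S_τ` are exactly the support of `h_S`. -/
def QuasiNormal {N : ℕ} (S : Set (Fin N → ℤ)) : Prop :=
  ∀ L0 : Set (Fin N → ℤ),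
    (IsBasedOrthant L0 ∧ L0 ⊆ indicatorImage S ∧
      ∀ L1, IsBasedOrthant L1 → L1 ⊆ indicatorImage S → L0 ⊆ L1 → L1 ⊆ L0)
    ↔ (IsBasedOrthant L0 ∧ 0 < hFun S L0)

/-- The germ `q` of `S'` is the image of the germ `p` of `S` under the injective pei-map `f`. -/
def GermMapsTo {N : ℕ} (f : (Fin N → ℤ) → (Fin N → ℤ)) (S S' : Set (Fin N → ℤ))
    (p : Σ k, Germ S k) (q : Σ k, Germ S' k) : Prop :=
  p.1 = q.1 ∧ ∃ (L : germSet S p.1) (L'' : Set (Fin N → ℤ)) (M : germSet S' q.1),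
    germOf S p.1 L = p.2 ∧ IsOrthantOfRank L'' p.1 ∧ L'' ⊆ L.1 ∧ Commensurable L.1 L'' ∧
    M.1 = f '' L'' ∧ germOf S' q.1 M = q.2

/-- A stack of `h` parallel rank-`n` orthants. -/
def IsStack {N : ℕ} (S : Set (Fin N → ℤ)) (n h : ℕ) : Prop :=
  ∃ (L0 : Set (Fin N → ℤ)) (a : Fin h → (Fin N → ℤ)),
    IsOrthantOfRank L0 n ∧
    (Pairwise fun i j => Disjoint (a i +ᵥ L0) (a j +ᵥ L0)) ∧
    S = ⋃ i, a i +ᵥ L0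

/-- A coordinate half-space of `ℤ^N`. -/
def IsHalfSpace {N : ℕ} (H : Set (Fin N → ℤ)) : Prop :=
  ∃ (i : Fin N) (c : ℤ), H = {x | x i ≤ c} ∨ H = {x | c ≤ x i}

/-- The canonical embedding `ℤ^N → ℤ^{N+1}`. -/
def emb (N : ℕ) (x : Fin N → ℤ) : Fin (N + 1) → ℤ :=
  fun i => if h : (i : ℕ) < N then x ⟨i, h⟩ else 0

/-- The sum of all matrix entries of a finitely supported family of vectors. -/
noncomputable def totalSum (k : ℕ) (Γ : Type*) : (Γ →₀ (Fin k → ℤ)) →+ ℤ :=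
  Finsupp.liftAddHom (fun _ => ∑ i : Fin k, Pi.evalAddMonoidHom (fun _ => ℤ) i)

/-- The clique (flag) complex of a graph. -/
def cliqueComplex {V : Type*} (G : SimpleGraph V) : Set (Finset V) :=
  {s | s.Nonempty ∧ G.IsClique (s : Set V)}

/-- The geometric realization of a simplicial complex on vertex set `V`. -/
def realization {V : Type*} (K : Set (Finset V)) : Set (V → ℝ) :=
  {f | (∀ v, 0 ≤ f v) ∧ ∃ s ∈ K, Function.support f ⊆ ↑s ∧ ∑ v ∈ s, f v = 1}

/-- A wedge (bouquet) of `n`-spheres indexed by `ι`, with basepoint `b`. -/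
noncomputable def wedgeSpheres (ι : Type) (n : ℕ)
    (b : Metric.sphere (0 : EuclideanSpace ℝ (Fin (n + 1))) 1) : Type :=
  Quot (fun p q : Unit ⊕ (ι × Metric.sphere (0 : EuclideanSpace ℝ (Fin (n + 1))) 1) =>
    (Sum.elim (fun _ => True) (fun pr => pr.2 = b) p) ∧
    (Sum.elim (fun _ => True) (fun qr => qr.2 = b) q))

noncomputable instance (ι : Type) (n : ℕ) (b : Metric.sphere (0 : EuclideanSpace ℝ (Fin (n + 1))) 1) :
    TopologicalSpace (wedgeSpheres ι n b) :=
  letI : TopologicalSpace ι := ⊥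
  instTopologicalSpaceQuot

/-! Integral orthogonal matrices are signed permutation matrices, so every integral orthant is a
coordinate orthant `b + Σ_{i ∈ I} ℕ • ε i • e i`. An element supported on an orthohedral set of
rank `< k` fixes pointwise a deep translate of every rank-`k` orthant (each orthant of the
support, having smaller rank, is bounded in one of its directions), whence
`G_{k-1} ≤ C^{ord}(Γ^k)`. For the rigidity, an isometry `x ↦ a + A x` of a rank-`(k+1)` orthant
is a translation as soon as `A` fixes each of its directions `e i`. If `k ≥ 1`, each direction
lies in a rank-`k` face, on a commensurable sub-orthant of which `g` is a translation. If `k = 0`,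
the orthant is a ray, and a ray meeting its image in a ray has the same direction as its image. -/

section

open Finset Matrix

lemma exists_eq_pm_one_of_sum_mul_self_eq_one {ι : Type*} [Fintype ι] {f : ι → ℤ}
    (h : ∑ l, f l * f l = 1) : ∃ j, (f j = 1 ∨ f j = -1) ∧ ∀ l ≠ j, f l = 0 := by
  classical
  obtain ⟨j, hj⟩ : ∃ j, f j ≠ 0 := by
    by_contra! h0
    simp [h0] at h
  have hsplit := add_sum_erase univ (fun l => f l * f l) (mem_univ j)
  have hrest : 0 ≤ ∑ l ∈ univ.erase j, f l * f l := sum_nonneg fun l _ => mul_self_nonneg _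
  have hjpos : 0 < f j * f j := mul_self_pos.2 hj
  have hrest0 : ∑ l ∈ univ.erase j, f l * f l = 0 := by linarith
  have hj1 : f j * f j = 1 := by linarith
  refine ⟨j, Int.eq_one_or_neg_one_of_mul_eq_one hj1, fun l hl => ?_⟩
  exact mul_self_eq_zero.1 <| (sum_eq_zero_iff_of_nonneg fun l _ => mul_self_nonneg (f l)).1
    hrest0 l (mem_erase.2 ⟨hl, mem_univ l⟩)

variable {N : ℕ}

lemma isOrthMat_one : IsOrthMat (1 : Matrix (Fin N) (Fin N) ℤ) := by
  simp [IsOrthMat]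

lemma IsOrthMat.exists_mulVec_eq {A : Matrix (Fin N) (Fin N) ℤ} (hA : IsOrthMat A) :
    ∃ (π : Equiv.Perm (Fin N)) (ε : Fin N → ℤ),
      (∀ i, ε i * ε i = 1) ∧ ∀ v i, (A *ᵥ v) i = ε i * v (π i) := by
  have hAA : ∀ i i', ∑ l, A i l * A i' l = if i = i' then 1 else 0 := fun i i' => by
    simpa [Matrix.mul_apply, Matrix.one_apply] using congrFun (congrFun hA i) i'
  choose f hf hf0 using fun i => exists_eq_pm_one_of_sum_mul_self_eq_one (by simpa using hAA i i)
  have hsq : ∀ i, A i (f i) * A i (f i) = 1 := fun i => by rcases hf i with h | h <;> simp [h]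
  have hinj : Function.Injective f := by
    intro i i' hii'
    by_contra hne
    have hsum : ∑ l, A i l * A i' l = A i (f i) * A i' (f i) :=
      Fintype.sum_eq_single _ fun l hl => by rw [hf0 i l hl, zero_mul]
    rw [hAA, if_neg hne, hii'] at hsum
    rcases hf i with h | h <;> rcases hf i' with h' | h' <;> simp_all
  refine ⟨Equiv.ofBijective f hinj.bijective_of_finite, fun i => A i (f i), hsq, fun v i => ?_⟩
  show ∑ l, A i l * v l = A i (f i) * v (f i)
  exact Fintype.sum_eq_single (f i) fun l hl => by rw [hf0 i l hl, zero_mul]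

def coordOrthant (b ε : Fin N → ℤ) (I : Finset (Fin N)) : Set (Fin N → ℤ) :=
  {x | (∀ i ∈ I, 0 ≤ ε i * (x i - b i)) ∧ ∀ i ∉ I, x i = b i}

lemma apex_mem_coordOrthant (b ε : Fin N → ℤ) (I : Finset (Fin N)) : b ∈ coordOrthant b ε I :=
  ⟨fun i _ => by simp, fun _ _ => rfl⟩

lemma add_single_mem_coordOrthant {b ε x : Fin N → ℤ} {I : Finset (Fin N)} {i : Fin N}
    {c : ℤ} (hi : i ∈ I) (hc : 0 ≤ ε i * c) (hx : x ∈ coordOrthant b ε I) :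
    x + Pi.single i c ∈ coordOrthant b ε I := by
  refine ⟨fun l hl => ?_, fun l hl => ?_⟩
  · rcases eq_or_ne l i with rfl | hli
    · have := add_nonneg (hx.1 l hl) hc
      simp only [Pi.add_apply, Pi.single_eq_same]
      linarith
    · simpa [hli] using hx.1 l hl
  · simpa [show l ≠ i by rintro rfl; exact hl hi] using hx.2 l hl

lemma coordOrthant_mono {b ε : Fin N → ℤ} {I J : Finset (Fin N)} (h : J ⊆ I) :
    coordOrthant b ε J ⊆ coordOrthant b ε I := by
  refine fun x hx => ⟨fun i hi => ?_, fun i hi => hx.2 i fun hiJ => hi (h hiJ)⟩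
  by_cases hiJ : i ∈ J
  · exact hx.1 i hiJ
  · simp [hx.2 i hiJ]

lemma mem_coordOrthant_singleton {b ε x : Fin N → ℤ} {i : Fin N} (hε : ε i * ε i = 1) :
    x ∈ coordOrthant b ε {i} ↔ ∃ s : ℤ, 0 ≤ s ∧ x = b + s • Pi.single i (ε i) := by
  constructor
  · rintro ⟨hi, hrest⟩
    refine ⟨ε i * (x i - b i), hi i (mem_singleton_self i), funext fun l => ?_⟩
    rcases eq_or_ne l i with rfl | hl
    · simp only [Pi.add_apply, Pi.smul_apply, Pi.single_eq_same, smul_eq_mul]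
      linear_combination (b l - x l) * hε
    · simp [hl, hrest l (by simpa using hl)]
  · rintro ⟨s, hs, rfl⟩
    simpa [← Pi.single_smul] using
      add_single_mem_coordOrthant (mem_singleton_self i)
        (by rwa [mul_left_comm, hε, mul_one]) (apex_mem_coordOrthant b ε {i})

lemma image_stdFace_eq_coordOrthant {A : Matrix (Fin N) (Fin N) ℤ} {π : Equiv.Perm (Fin N)}
    {ε : Fin N → ℤ} (hε : ∀ i, ε i * ε i = 1) (hA : ∀ v i, (A *ᵥ v) i = ε i * v (π i))
    (a : Fin N → ℤ) (Y : Finset (Fin N)) :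
    (fun v => a + A *ᵥ v) '' stdFace N Y = coordOrthant a ε {i | π i ∈ Y} := by
  ext x
  constructor
  · rintro ⟨v, ⟨hv0, hvY⟩, rfl⟩
    have hx : ∀ i, (a + A *ᵥ v) i - a i = ε i * v (π i) := by simp [hA]
    refine ⟨fun i _ => ?_, fun i hi => ?_⟩
    · rw [hx, ← mul_assoc, hε, one_mul]
      exact hv0 _
    · have := hx i
      rw [hvY (π i) (by simpa using hi), mul_zero] at this
      linarith
  · rintro ⟨h1, h2⟩
    refine ⟨fun j => ε (π.symm j) * (x (π.symm j) - a (π.symm j)),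
      ⟨fun j => ?_, fun j hj => ?_⟩, funext fun i => ?_⟩
    · by_cases hj : j ∈ Y
      · exact h1 _ (by simpa using hj)
      · dsimp only
        rw [h2 (π.symm j) (by simpa using hj), sub_self, mul_zero]
    · dsimp only
      rw [h2 (π.symm j) (by simpa using hj), sub_self, mul_zero]
    · simp only [Pi.add_apply, hA, Equiv.symm_apply_apply, ← mul_assoc, hε, one_mul]
      ring

lemma isOrthantOfRank_coordOrthant {b ε : Fin N → ℤ} (hε : ∀ i, ε i * ε i = 1)
    (I : Finset (Fin N)) : IsOrthantOfRank (coordOrthant b ε I) I.card := by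
  refine ⟨b, diagonal ε, I, by simp [IsOrthMat, diagonal_mul_diagonal, hε], rfl, ?_⟩
  rw [image_stdFace_eq_coordOrthant hε (π := 1) (fun v i => by simp [mulVec_diagonal])]
  congr
  ext
  simp only [Finset.mem_filter, Finset.mem_univ, true_and]
  rfl

lemma IsOrthantOfRank.exists_eq_coordOrthant {L : Set (Fin N → ℤ)} {k : ℕ}
    (hL : IsOrthantOfRank L k) :
    ∃ (b ε : Fin N → ℤ) (I : Finset (Fin N)), I.card = k ∧ (∀ i, ε i * ε i = 1) ∧
      L = coordOrthant b ε I := by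
  obtain ⟨a, A, Y, hA, rfl, rfl⟩ := hL
  obtain ⟨π, ε, hε, hAε⟩ := hA.exists_mulVec_eq
  refine ⟨a, ε, _, ?_, hε, image_stdFace_eq_coordOrthant hε hAε a Y⟩
  rw [show ({i | π i ∈ Y} : Finset (Fin N)) = Y.map π.symm.toEmbedding by
    ext i; simp]
  exact card_map _

lemma subset_of_coordOrthant_subset {b b' ε ε' : Fin N → ℤ} {I J : Finset (Fin N)}
    (hε' : ∀ j, ε' j * ε' j = 1) (h : coordOrthant b' ε' J ⊆ coordOrthant b ε I) : J ⊆ I := by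
  intro j hj
  by_contra hjI
  have hapex := (h (apex_mem_coordOrthant b' ε' J)).2 j hjI
  have hstep := (h (add_single_mem_coordOrthant hj (by rw [hε' j]; exact zero_le_one)
    (apex_mem_coordOrthant b' ε' J))).2 j hjI
  have := hε' j
  simp only [Pi.add_apply, Pi.single_eq_same] at hstep
  rw [show ε' j = 0 by linarith, mul_zero] at this
  exact zero_ne_one this

lemma IsOrthantOfRank.le_of_subset {L M : Set (Fin N → ℤ)} {k m : ℕ} (hL : IsOrthantOfRank L k)
    (hM : IsOrthantOfRank M m) (h : M ⊆ L) : m ≤ k := by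
  obtain ⟨b, ε, I, rfl, -, rfl⟩ := hL.exists_eq_coordOrthant
  obtain ⟨b', ε', J, rfl, hε', rfl⟩ := hM.exists_eq_coordOrthant
  exact card_le_card (subset_of_coordOrthant_subset hε' h)

lemma IsOrthantOfRank.le_dim {L : Set (Fin N → ℤ)} {k : ℕ} (hL : IsOrthantOfRank L k) :
    k ≤ N := by
  obtain ⟨-, -, Y, -, rfl, -⟩ := hL
  simpa using card_le_univ Y

lemma bddAbove_orthantRanks (S : Set (Fin N → ℤ)) :
    BddAbove {k | ∃ L, IsOrthantOfRank L k ∧ L ⊆ S} :=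
  ⟨N, fun _ ⟨_, hL, _⟩ => hL.le_dim⟩

lemma IsOrthantOfRank.le_orthRank {L S : Set (Fin N → ℤ)} {k : ℕ} (hL : IsOrthantOfRank L k)
    (hLS : L ⊆ S) : k ≤ orthRank S :=
  le_csSup (bddAbove_orthantRanks S) ⟨L, hL, hLS⟩

lemma IsOrthantOfRank.orthRank_eq {L : Set (Fin N → ℤ)} {k : ℕ} (hL : IsOrthantOfRank L k) :
    orthRank L = k :=
  le_antisymm (csSup_le ⟨k, L, hL, subset_rfl⟩ fun _ ⟨_, hM, hML⟩ => hL.le_of_subset hM hML)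
    (hL.le_orthRank subset_rfl)

lemma isOrthantOfRank_singleton (p : Fin N → ℤ) : IsOrthantOfRank {p} 0 := by
  have h : coordOrthant p 1 ∅ = {p} := by
    ext x
    simp [coordOrthant, funext_iff]
  simpa [h] using isOrthantOfRank_coordOrthant (b := p) (ε := 1) (by simp) ∅

lemma exists_isOrthantOfRank_orthRank {S : Set (Fin N → ℤ)} (hS : S.Nonempty) :
    ∃ L, IsOrthantOfRank L (orthRank S) ∧ L ⊆ S := by
  obtain ⟨p, hp⟩ := hS
  exact Nat.sSup_mem (s := {k | ∃ L, IsOrthantOfRank L k ∧ L ⊆ S})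
    ⟨0, {p}, isOrthantOfRank_singleton p, Set.singleton_subset_iff.2 hp⟩ (bddAbove_orthantRanks S)

lemma IsOrthantOfRank.nonempty {L : Set (Fin N → ℤ)} {k : ℕ} (hL : IsOrthantOfRank L k) :
    L.Nonempty := by
  obtain ⟨b, ε, I, -, -, rfl⟩ := hL.exists_eq_coordOrthant
  exact ⟨b, apex_mem_coordOrthant b ε I⟩

lemma Commensurable.symm {L L' : Set (Fin N → ℤ)} (h : Commensurable L L') :
    Commensurable L' L := by
  obtain ⟨hne, h1, h2⟩ := h
  rw [Set.inter_comm] at hne h1 h2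
  exact ⟨hne, h2, h1⟩

lemma commensurable_of_subset {L L' : Set (Fin N → ℤ)} {k : ℕ} (hL : IsOrthantOfRank L k)
    (hL' : IsOrthantOfRank L' k) (h : L' ⊆ L) : Commensurable L L' := by
  rw [Commensurable, Set.inter_eq_right.2 h, hL.orthRank_eq, hL'.orthRank_eq]
  exact ⟨hL'.nonempty, rfl, rfl⟩

lemma IsOrthantOfRank.exists_coord_le_of_lt_card {M : Set (Fin N → ℤ)} {m : ℕ}
    (hM : IsOrthantOfRank M m) {b ε : Fin N → ℤ} {I : Finset (Fin N)} (hm : m < I.card) :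
    ∃ i ∈ I, ∃ c : ℤ, ∀ x ∈ M, ε i * (x i - b i) ≤ c := by
  obtain ⟨bM, εM, J, rfl, -, rfl⟩ := hM.exists_eq_coordOrthant
  obtain ⟨i, hiI, hiJ⟩ := not_subset.1 fun h => (card_le_card h).not_gt hm
  exact ⟨i, hiI, ε i * (bM i - b i), fun x hx => by rw [hx.2 i hiJ]⟩

lemma exists_coordOrthant_subset_forall_le (b : Fin N → ℤ) {ε : Fin N → ℤ}
    (hε : ∀ i, ε i * ε i = 1) (I : Finset (Fin N)) {t : ℤ} (ht : 0 ≤ t) :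
    ∃ b', coordOrthant b' ε I ⊆ coordOrthant b ε I ∧
      ∀ x ∈ coordOrthant b' ε I, ∀ i ∈ I, t ≤ ε i * (x i - b i) := by
  set b' : Fin N → ℤ := b + fun i => if i ∈ I then t * ε i else 0
  have hdeep : ∀ x ∈ coordOrthant b' ε I, ∀ i ∈ I, t ≤ ε i * (x i - b i) := by
    intro x hx i hi
    have := hx.1 i hi
    simp only [b', Pi.add_apply, hi, if_true] at this
    linear_combination this - t * hε i
  refine ⟨b', fun x hx => ⟨fun i hi => ht.trans (hdeep x hx i hi), fun i hi => ?_⟩, hdeep⟩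
  simp [hx.2 i hi, b', hi]

lemma IsOrthohedral.exists_subset_disjoint {T : Set (Fin N → ℤ)} (hT : IsOrthohedral T) {k : ℕ}
    (hk : orthRank T < k) {L : Set (Fin N → ℤ)} (hL : IsOrthantOfRank L k) :
    ∃ L', IsOrthantOfRank L' k ∧ L' ⊆ L ∧ Disjoint L' T := by
  obtain ⟨b, ε, I, rfl, hε, rfl⟩ := hL.exists_eq_coordOrthant
  obtain ⟨𝓛, hfin, horth, rfl⟩ := hT
  have hbound : ∀ M ∈ 𝓛, ∃ i ∈ I, ∃ c : ℤ, ∀ x ∈ M, ε i * (x i - b i) ≤ c := by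
    intro M hM
    obtain ⟨m, hMm⟩ := horth M hM
    exact hMm.exists_coord_le_of_lt_card
      ((hMm.le_orthRank (Set.subset_sUnion_of_mem hM)).trans_lt hk)
  choose i hi c hc using hbound
  have := hfin.to_subtype
  obtain ⟨t, ht⟩ := (Set.finite_range fun M : 𝓛 => c M M.2).bddAbove
  obtain ⟨b', hsub, hdeep⟩ :=
    exists_coordOrthant_subset_forall_le b hε I (le_max_right t 0 |>.trans (lt_add_one _).le)
  refine ⟨_, isOrthantOfRank_coordOrthant hε I, hsub, Set.disjoint_left.2 ?_⟩
  rintro x hx ⟨M, hM, hxM⟩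
  have h1 := hdeep x hx (i M hM) (hi M hM)
  have h2 := hc M hM x hxM
  have h3 : c M hM ≤ t := ht (Set.mem_range_self (⟨M, hM⟩ : 𝓛))
  have h4 := le_max_left t 0
  omega

lemma translatesGerm_one (S : Set (Fin N → ℤ)) (k : ℕ) : TranslatesGerm S k 1 := by
  intro L hL _
  have hLL := commensurable_of_subset hL hL subset_rfl
  exact ⟨L, 0, hL, subset_rfl, hLL, by simp, by simpa using hLL⟩

lemma TranslatesGerm.fixesGerm {S : Set (Fin N → ℤ)} {k : ℕ} {g : Equiv.Perm (Fin N → ℤ)}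
    (hg : TranslatesGerm S k g) : FixesGerm S k g := by
  intro L hL hLS
  obtain ⟨L', a, hL', hsub, hc, htr, hc'⟩ := hg L hL hLS
  exact ⟨L', hL', hsub, hc, ⟨a, 1, isOrthMat_one, by simpa using htr⟩, hc'⟩

lemma rankLE.mono {g : Equiv.Perm (Fin N → ℤ)} {j k : ℕ} (hg : rankLE g j) (hjk : j ≤ k) :
    rankLE g k :=
  let ⟨T, hT, hTj, hfix⟩ := hg
  ⟨T, hT, hTj.trans hjk, hfix⟩

lemma translatesGerm_of_rankLE (S : Set (Fin N → ℤ)) {g : Equiv.Perm (Fin N → ℤ)} {j k : ℕ}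
    (hg : rankLE g j) (hjk : j < k) : TranslatesGerm S k g := by
  obtain ⟨T, hT, hTj, hfix⟩ := hg
  intro L hL _
  obtain ⟨L', hL', hsub, hdisj⟩ := hT.exists_subset_disjoint (hTj.trans_lt hjk) hL
  have hfixL' : ∀ x ∈ L', g x = x := fun x hx => hfix x (Set.disjoint_left.1 hdisj hx)
  have himg : ⇑g '' L' = L' := Set.EqOn.image_eq_self hfixL'
  refine ⟨L', 0, hL', hsub, commensurable_of_subset hL hL' hsub,
    fun x hx => by rw [zero_add, hfixL' x hx], ?_⟩
  rw [himg]
  exact (commensurable_of_subset hL hL' hsub).symm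

lemma eq_of_ray_subset_ray {r c v w : Fin N → ℤ} {i : Fin N} (hv : IsUnit (v i))
    (h : ∀ t : ℤ, 0 ≤ t → ∃ s : ℤ, 0 ≤ s ∧ r + t • v = c + s • w) : v = w := by
  obtain ⟨s₀, hs₀, h₀⟩ := h 0 le_rfl
  obtain ⟨s₁, -, h₁⟩ := h 1 zero_le_one
  obtain ⟨s, hs, hfar⟩ := h (s₀ + 1) (by omega)
  have hvw : v = (s₁ - s₀) • w := by linear_combination (norm := module) h₁ - h₀
  have hfar' : (s₀ + 1) • v = (s - s₀) • w := by linear_combination (norm := module) hfar - h₀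
  have hvi : v i = (s₁ - s₀) * w i := by simpa using congrFun hvw i
  have hfari : (s₀ + 1) * v i = (s - s₀) * w i := by simpa using congrFun hfar' i
  have hwi : w i ≠ 0 := fun hw => hv.ne_zero (by rw [hvi, hw, mul_zero])
  have hd : (s₀ + 1) * (s₁ - s₀) = s - s₀ :=
    mul_right_cancel₀ hwi (by rw [mul_assoc, ← hvi, hfari])
  -- `s₁ - s₀` is a unit, and it cannot be `-1` since the far point `s` would be negative
  have hd1 : s₁ - s₀ = 1 := by
    rcases Int.isUnit_iff.1 (isUnit_of_mul_isUnit_left (hvi ▸ hv)) with h | h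
    · exact h
    · rw [h] at hd
      omega
  rw [hvw, hd1, one_smul]

lemma single_eq_smul_single_one (i : Fin N) (c : ℤ) :
    Pi.single i c = c • (Pi.single i 1 : Fin N → ℤ) := by
  rw [← Pi.single_smul, smul_eq_mul, mul_one]

lemma mulVec_single_one_of_mulVec_single {A : Matrix (Fin N) (Fin N) ℤ} {i : Fin N} {c : ℤ}
    (hc : c ≠ 0) (h : A *ᵥ Pi.single i c = Pi.single i c) :
    A *ᵥ Pi.single i 1 = Pi.single i 1 := by
  rw [single_eq_smul_single_one, mulVec_smul] at h
  exact smul_right_injective _ hc h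

lemma mulVec_eq_self_of_mulVec_single {A : Matrix (Fin N) (Fin N) ℤ} {v : Fin N → ℤ}
    (h : ∀ j, v j ≠ 0 → A *ᵥ Pi.single j 1 = Pi.single j 1) : A *ᵥ v = v := by
  calc A *ᵥ v = ∑ j, A *ᵥ Pi.single j (v j) := by rw [← mulVec_sum, univ_sum_single]
    _ = ∑ j, Pi.single j (v j) := sum_congr rfl fun j _ => by
      by_cases hj : v j = 0
      · simp [hj]
      · rw [single_eq_smul_single_one, mulVec_smul, h j hj]
    _ = v := univ_sum_single v

lemma mulVec_eq_self_of_affine_eq {A : Matrix (Fin N) (Fin N) ℤ} {a c p v : Fin N → ℤ}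
    (hp : a + A *ᵥ p = c + p) (hpv : a + A *ᵥ (p + v) = c + (p + v)) : A *ᵥ v = v := by
  rw [mulVec_add] at hpv
  linear_combination (norm := module) hpv - hp

lemma translationOn_coordOrthant {g : (Fin N → ℤ) → (Fin N → ℤ)} {a b ε : Fin N → ℤ}
    {A : Matrix (Fin N) (Fin N) ℤ} {I : Finset (Fin N)}
    (hg : ∀ x ∈ coordOrthant b ε I, g x = a + A *ᵥ x)
    (hA : ∀ i ∈ I, A *ᵥ Pi.single i 1 = Pi.single i 1) :
    TranslationOn g (coordOrthant b ε I) := by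
  refine ⟨a + A *ᵥ b - b, fun x hx => ?_⟩
  have hxb : A *ᵥ (x - b) = x - b := mulVec_eq_self_of_mulVec_single fun j hj =>
    hA j (by_contra fun hjI => hj (by simp [hx.2 j hjI]))
  rw [mulVec_sub] at hxb
  rw [hg x hx]
  linear_combination (norm := module) hxb

lemma mulVec_single_eq_of_commensurable_image {g : (Fin N → ℤ) → (Fin N → ℤ)}
    {a b ε : Fin N → ℤ} {A : Matrix (Fin N) (Fin N) ℤ} {i : Fin N} (hε : ∀ j, ε j * ε j = 1)
    (hg : ∀ x ∈ coordOrthant b ε {i}, g x = a + A *ᵥ x)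
    (hc : Commensurable (g '' coordOrthant b ε {i}) (coordOrthant b ε {i})) :
    A *ᵥ Pi.single i 1 = Pi.single i 1 := by
  set L := coordOrthant b ε {i}
  have hL : IsOrthantOfRank L 1 := by simpa using isOrthantOfRank_coordOrthant (b := b) hε {i}
  obtain ⟨R, hR, hRsub⟩ : ∃ R, IsOrthantOfRank R 1 ∧ R ⊆ g '' L ∩ L := by
    simpa [← hc.2.2, hL.orthRank_eq] using exists_isOrthantOfRank_orthRank hc.1
  obtain ⟨r, δ, J, hJ, hδ, rfl⟩ := hR.exists_eq_coordOrthant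
  obtain rfl : J = {i} := eq_of_subset_of_card_le
    (subset_of_coordOrthant_subset hδ (hRsub.trans Set.inter_subset_right)) (by simp [hJ])
  have hray : ∀ t : ℤ, 0 ≤ t → r + t • Pi.single i (δ i) ∈ g '' L ∩ L := fun t ht => by
    rw [← Pi.single_smul]
    exact hRsub (add_single_mem_coordOrthant (mem_singleton_self i)
      (by rwa [smul_eq_mul, mul_left_comm, hδ, mul_one]) (apex_mem_coordOrthant r δ {i}))
  have hunit : IsUnit ((Pi.single i (δ i) : Fin N → ℤ) i) := by
    simpa using IsUnit.of_mul_eq_one _ (hδ i)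
  have hdirL : Pi.single i (δ i) = Pi.single i (ε i) := eq_of_ray_subset_ray hunit fun t ht =>
    (mem_coordOrthant_singleton (hε i)).1 (hray t ht).2
  have hdirgL : Pi.single i (δ i) = A *ᵥ Pi.single i (ε i) :=
    eq_of_ray_subset_ray hunit fun t ht => by
      obtain ⟨y, hy, hgy⟩ := (hray t ht).1
      obtain ⟨s, hs, rfl⟩ := (mem_coordOrthant_singleton (hε i)).1 hy
      exact ⟨s, hs, by rw [← hgy, hg _ hy, mulVec_add, mulVec_smul, add_assoc]⟩
  refine mulVec_single_one_of_mulVec_single (c := ε i) (fun h0 => ?_) (hdirgL.symm.trans hdirL)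
  simpa [h0] using hε i

lemma mulVec_single_eq_of_translatesGerm {S : Set (Fin N → ℤ)} {k : ℕ}
    {g : Equiv.Perm (Fin N → ℤ)} {a b ε : Fin N → ℤ} {A : Matrix (Fin N) (Fin N) ℤ}
    {I : Finset (Fin N)} (hε : ∀ j, ε j * ε j = 1) (hI : I.card = k + 1) (hk : k ≠ 0)
    (hTG : TranslatesGerm S k g) (hLS : coordOrthant b ε I ⊆ S)
    (hg : ∀ x ∈ coordOrthant b ε I, g x = a + A *ᵥ x) {i : Fin N} (hi : i ∈ I) :
    A *ᵥ Pi.single i 1 = Pi.single i 1 := by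
  obtain ⟨i₀, hi₀, hne⟩ := I.exists_mem_ne (by omega) i
  have hcard : (I.erase i₀).card = k := by rw [card_erase_of_mem hi₀, hI, Nat.add_sub_cancel]
  have hFL : coordOrthant b ε (I.erase i₀) ⊆ coordOrthant b ε I :=
    coordOrthant_mono (erase_subset i₀ I)
  obtain ⟨L', c, hL', hL'F, -, htr, -⟩ :=
    hTG _ (hcard ▸ isOrthantOfRank_coordOrthant hε _) (hFL.trans hLS)
  obtain ⟨b', ε', J, hJ, hε', rfl⟩ := hL'.exists_eq_coordOrthant
  have hiJ : i ∈ J := by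
    rw [eq_of_subset_of_card_le (subset_of_coordOrthant_subset hε' hL'F) (by rw [hJ, hcard])]
    exact mem_erase.2 ⟨hne.symm, hi⟩
  -- on the face `L'` the map `g` is both `x ↦ a + A x` and the translation `x ↦ c + x`
  have hb' := apex_mem_coordOrthant b' ε' J
  have hstep := add_single_mem_coordOrthant hiJ (by rw [hε' i]; exact zero_le_one) hb'
  refine mulVec_single_one_of_mulVec_single (c := ε' i) (fun h0 => ?_)
    (mulVec_eq_self_of_affine_eq ((hg _ (hFL (hL'F hb'))).symm.trans (htr _ hb'))
      ((hg _ (hFL (hL'F hstep))).symm.trans (htr _ hstep)))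
  simpa [h0] using hε' i

theorem translationOn_of_translatesGerm {S : Set (Fin N → ℤ)} {k : ℕ}
    {g : Equiv.Perm (Fin N → ℤ)} (hTG : TranslatesGerm S k g) {L : Set (Fin N → ℤ)}
    (hL : IsOrthantOfRank L (k + 1)) (hLS : L ⊆ S) (hiso : IsometricOn g L)
    (hc : Commensurable (g '' L) L) : TranslationOn g L := by
  obtain ⟨a, A, -, hg⟩ := hiso
  obtain ⟨b, ε, I, hI, hε, rfl⟩ := hL.exists_eq_coordOrthant
  refine translationOn_coordOrthant hg fun i hi => ?_
  rcases eq_or_ne k 0 with rfl | hk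
  · obtain rfl : I = {i} := eq_singleton_iff_unique_mem.2
      ⟨hi, fun j hj => card_le_one.1 hI.le j hj i hi⟩
    exact mulVec_single_eq_of_commensurable_image hε hg hc
  · exact mulVec_single_eq_of_translatesGerm hε hI hk hTG hLS hg hi

end

theorem stmt10_general {N : ℕ} (S : Set (Fin N → ℤ)) (k : ℕ) :
    (FixesGerm S k 1 ∧ TranslatesGerm S k 1) ∧
    (∀ j, j + 1 = k → ∀ g : Equiv.Perm (Fin N → ℤ), IsPeiPerm S g → rankLE g j →
      rankLE g k ∧ FixesGerm S k g ∧ TranslatesGerm S k g) ∧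
    ({g : Equiv.Perm (Fin N → ℤ) | IsPeiPerm S g ∧ rankLE g k ∧ FixesGerm S k g ∧
        TranslatesGerm S k g}
      ⊆ {g | IsPeiPerm S g ∧ rankLE g k ∧ FixesGerm S k g}) ∧
    ({g : Equiv.Perm (Fin N → ℤ) | IsPeiPerm S g ∧ rankLE g k ∧ FixesGerm S k g}
      ⊆ {g | IsPeiPerm S g ∧ rankLE g k}) ∧
    (∀ g : Equiv.Perm (Fin N → ℤ), IsPeiPerm S g → rankLE g (k + 1) →
      FixesGerm S k g → TranslatesGerm S k g →
      ∀ L, IsOrthantOfRank L (k + 1) → L ⊆ S → IsometricOn (⇑g) L →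
        Commensurable (⇑g '' L) L → TranslationOn (⇑g) L) := by
  refine ⟨⟨(translatesGerm_one S k).fixesGerm, translatesGerm_one S k⟩, fun j hj g _ hg => ?_,
    fun g hg => ⟨hg.1, hg.2.1, hg.2.2.1⟩, fun g hg => ⟨hg.1, hg.2.1⟩,
    fun g _ _ _ hTG _ hL hLS hiso hc => translationOn_of_translatesGerm hTG hL hLS hiso hc⟩
  have hTG := translatesGerm_of_rankLE S hg (by omega : j < k)
  exact ⟨hg.mono (by omega), hTG.fixesGerm, hTG⟩

/-- the normal series `G_{k-1} ≤ C^{ord}(Γ^k) ≤ C(Γ^k) ≤ G_k`, and the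
rigidity statement: a rank-`≤ k+1` element fixing all rank-`k` germs with their
orderings acts by a parallel translation on any rank-`(k+1)` orthant which it maps
isometrically to a commensurable orthant. -/
theorem stmt10 {N : ℕ} (S : Set (Fin N → ℤ)) (hS : IsOrthohedral S) (k : ℕ)
    (hk : k ≤ orthRank S) :
    (FixesGerm S k 1 ∧ TranslatesGerm S k 1) ∧
    (∀ j, j + 1 = k → ∀ g : Equiv.Perm (Fin N → ℤ), IsPeiPerm S g → rankLE g j →
      rankLE g k ∧ FixesGerm S k g ∧ TranslatesGerm S k g) ∧
    ({g : Equiv.Perm (Fin N → ℤ) | IsPeiPerm S g ∧ rankLE g k ∧ FixesGerm S k g ∧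
        TranslatesGerm S k g}
      ⊆ {g | IsPeiPerm S g ∧ rankLE g k ∧ FixesGerm S k g}) ∧
    ({g : Equiv.Perm (Fin N → ℤ) | IsPeiPerm S g ∧ rankLE g k ∧ FixesGerm S k g}
      ⊆ {g | IsPeiPerm S g ∧ rankLE g k}) ∧
    (∀ g : Equiv.Perm (Fin N → ℤ), IsPeiPerm S g → rankLE g (k + 1) →
      FixesGerm S k g → TranslatesGerm S k g →
      ∀ L, IsOrthantOfRank L (k + 1) → L ⊆ S → IsometricOn (⇑g) L →
        Commensurable (⇑g '' L) L → TranslationOn (⇑g) L) :=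
  stmt10_general S k

end PeiPaper
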